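/- arXiv:2306.06786 — 3 statements merged into one kernel-verified Lean document; each statement's English description precedes it below -/
import Mathlib

section
/- Let R = (R¹, R²): ℝⁿ × ℝⁿ → ℝⁿ × ℝⁿ be smooth (C¹) with R(x,0) = (x,x) for all x and with D_v R²(x,0) − D_v R¹(x,0) = Id for all x. Then for every x ∈ ℝⁿ the total derivative DR(x,0) is an invertible linear map on ℝ²ⁿ; in particular R is a local diffeomorphism near every point of the zero section {(x,0)}. -/
/-!
With respect to the splitting `E × E`, the derivative `DR(x,0)` is the block operator
`[[1, A], [1, B]]`: its first column comes from differentiating `R(y,0) = (y,y)` in `y`, and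
`A`, `B` are the partial derivatives of `R¹`, `R²` in `v`. Subtracting the first row from the
second gives `[[1, A], [0, B - A]] = [[1, A], [0, 1]]`, which is invertible, so the inverse
function theorem applies at `(x,0)`.
-/

open ContinuousLinearMap Filter

variable {𝕜 : Type*} [NontriviallyNormedField 𝕜] {E : Type*} [NormedAddCommGroup E]
  [NormedSpace 𝕜 E]

theorem ContinuousLinearMap.isInvertible_of_comp_inl_eq_diag {D : E × E →L[𝕜] E × E}
    (hinl : D ∘L inl 𝕜 E E = (ContinuousLinearMap.id 𝕜 E).prod (ContinuousLinearMap.id 𝕜 E))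
    (hinr : snd 𝕜 E E ∘L D ∘L inr 𝕜 E E - fst 𝕜 E E ∘L D ∘L inr 𝕜 E E =
      ContinuousLinearMap.id 𝕜 E) :
    D.IsInvertible := by
  set A := fst 𝕜 E E ∘L D ∘L inr 𝕜 E E
  have hD : ∀ h k : E, D (h, k) = (h + A k, h + A k + k) := by
    intro h k
    have hh : D (h, 0) = (h, h) := by simpa using congr($hinl h)
    have hk : (D (0, k)).2 = A k + k := by
      simpa [A, sub_eq_iff_eq_add'] using congr($hinr k)
    rw [show (h, k) = (h, 0) + (0, k) by simp, map_add, hh, Prod.ext_iff]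
    simp [hk, A, add_assoc]
  refine IsInvertible.of_inverse
    (g := (fst 𝕜 E E - A ∘L (snd 𝕜 E E - fst 𝕜 E E)).prod (snd 𝕜 E E - fst 𝕜 E E)) ?_ ?_ <;>
  · ext p <;> simp [hD]

theorem HasStrictFDerivAt.exists_mem_nhds_injOn {F : Type*} [NormedAddCommGroup F]
    [NormedSpace 𝕜 F] [CompleteSpace E] [CompleteSpace F] {f : E → F} {f' : E ≃L[𝕜] F} {a : E}
    (hf : HasStrictFDerivAt f (f' : E →L[𝕜] F) a) : ∃ s ∈ nhds a, Set.InjOn f s := by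
  refine ⟨_, (hf.toOpenPartialHomeomorph f).open_source.mem_nhds
    hf.mem_toOpenPartialHomeomorph_source, ?_⟩
  simpa [hf.toOpenPartialHomeomorph_coe] using (hf.toOpenPartialHomeomorph f).injOn

/-- Any discretization map on ℝⁿ has invertible derivative along the zero section, and in
particular is a local diffeomorphism (locally injective) near every point of the zero section. -/
theorem discretization_map_local_diffeo (n : ℕ)
    (R : EuclideanSpace ℝ (Fin n) × EuclideanSpace ℝ (Fin n) →
         EuclideanSpace ℝ (Fin n) × EuclideanSpace ℝ (Fin n))
    (hR : ContDiff ℝ 1 R)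
    (hR0 : ∀ x : EuclideanSpace ℝ (Fin n), R (x, 0) = (x, x))
    (hRd : ∀ x : EuclideanSpace ℝ (Fin n),
      fderiv ℝ (fun v : EuclideanSpace ℝ (Fin n) => (R (x, v)).2) 0 -
        fderiv ℝ (fun v : EuclideanSpace ℝ (Fin n) => (R (x, v)).1) 0 =
      ContinuousLinearMap.id ℝ (EuclideanSpace ℝ (Fin n))) :
    ∀ x : EuclideanSpace ℝ (Fin n),
      (∃ L : (EuclideanSpace ℝ (Fin n) × EuclideanSpace ℝ (Fin n)) ≃L[ℝ]
              (EuclideanSpace ℝ (Fin n) × EuclideanSpace ℝ (Fin n)),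
        (L : EuclideanSpace ℝ (Fin n) × EuclideanSpace ℝ (Fin n) →L[ℝ]
              EuclideanSpace ℝ (Fin n) × EuclideanSpace ℝ (Fin n)) =
          fderiv ℝ R (x, 0)) ∧
      ∃ s ∈ nhds ((x, (0 : EuclideanSpace ℝ (Fin n)))), Set.InjOn R s := by
  intro x
  have hD : HasStrictFDerivAt R (fderiv ℝ R (x, 0)) (x, 0) := hR.hasStrictFDerivAt one_ne_zero
  have hinl := (hD.hasFDerivAt.comp x (hasFDerivAt_prodMk_left (𝕜 := ℝ) x 0)).unique
    (((hasFDerivAt_id (𝕜 := ℝ) x).prodMk (hasFDerivAt_id x)).congr_of_eventuallyEq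
      (Eventually.of_forall hR0) :)
  have hpartial : HasFDerivAt (fun v => R (x, v)) (fderiv ℝ R (x, 0) ∘L inr ℝ _ _) 0 :=
    hD.hasFDerivAt.comp 0 (hasFDerivAt_prodMk_right x 0)
  have hinr := hRd x
  rw [hpartial.fst.fderiv, hpartial.snd.fderiv] at hinr
  obtain ⟨L, hL⟩ := isInvertible_of_comp_inl_eq_diag hinl hinr
  exact ⟨⟨L, hL⟩, (hL ▸ hD).exists_mem_nhds_injOn⟩
end

section
/- For h > 0, the linear map G: ℝ⁴ⁿ → ℝ⁴ⁿ, G(q₀,p₀,q₁,p₁) = (q₀, p₁, (q₁−q₀)/h, (p₁−p₀)/h) (the inverse of the cotangent-lifted symplectic Euler-A discretization) satisfies d_Tω(Gu, Gw) = (1/h)·Ω₁₂(u,w) for all u,w ∈ ℝ⁴ⁿ. In particular G is a linear symplectomorphism from (ℝ⁴ⁿ, Ω₁₂) to (ℝ⁴ⁿ, h·d_Tω). -/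
open scoped RealInnerProductSpace

/-- The form d_Tω on ℝ⁴ⁿ, coordinates (q,p,q̇,ṗ). -/
noncomputable def dTomega (n : ℕ)
    (u w : EuclideanSpace ℝ (Fin n) × EuclideanSpace ℝ (Fin n) ×
           EuclideanSpace ℝ (Fin n) × EuclideanSpace ℝ (Fin n)) : ℝ :=
  ⟪u.1, w.2.2.2⟫ - ⟪w.1, u.2.2.2⟫ + ⟪u.2.2.1, w.2.1⟫ - ⟪w.2.2.1, u.2.1⟫

/-- Ω₁₂((u₀,v₀,u₁,v₁),(w₀,z₀,w₁,z₁)) = (⟨z₁,u₁⟩ − ⟨v₁,w₁⟩) − (⟨z₀,u₀⟩ − ⟨v₀,w₀⟩). -/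
noncomputable def Omega12 (n : ℕ)
    (u w : EuclideanSpace ℝ (Fin n) × EuclideanSpace ℝ (Fin n) ×
           EuclideanSpace ℝ (Fin n) × EuclideanSpace ℝ (Fin n)) : ℝ :=
  (⟪w.2.2.2, u.2.2.1⟫ - ⟪u.2.2.2, w.2.2.1⟫) - (⟪w.2.1, u.1⟫ - ⟪u.2.1, w.1⟫)

/-- G(q₀,p₀,q₁,p₁) = (q₀, p₁, (q₁−q₀)/h, (p₁−p₀)/h), the inverse of the cotangent-lifted
symplectic Euler-A discretization. -/
noncomputable def eulerAInv (n : ℕ) (h : ℝ)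
    (u : EuclideanSpace ℝ (Fin n) × EuclideanSpace ℝ (Fin n) ×
         EuclideanSpace ℝ (Fin n) × EuclideanSpace ℝ (Fin n)) :
    EuclideanSpace ℝ (Fin n) × EuclideanSpace ℝ (Fin n) ×
    EuclideanSpace ℝ (Fin n) × EuclideanSpace ℝ (Fin n) :=
  (u.1, u.2.2.2, h⁻¹ • (u.2.2.1 - u.1), h⁻¹ • (u.2.2.2 - u.2.1))

theorem eulerA_inverse_symplectic_general (n : ℕ) (h : ℝ) :
    ∀ u w, dTomega n (eulerAInv n h u) (eulerAInv n h w) = h⁻¹ * Omega12 n u w := by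
  rintro ⟨q₀, p₀, q₁, p₁⟩ ⟨q₀', p₀', q₁', p₁'⟩
  -- The terms ±h⁻¹⟪q₀, p₁'⟫ from ⟪q, ṗ'⟫ and ⟪q̇, p'⟫ cancel (likewise with the
  -- primes swapped), leaving h⁻¹ Ω₁₂.
  simp only [dTomega, Omega12, eulerAInv, inner_smul_left, inner_smul_right, inner_sub_left,
    inner_sub_right, conj_trivial]
  rw [real_inner_comm q₀ p₀', real_inner_comm q₀' p₀, real_inner_comm q₁ p₁', real_inner_comm q₁' p₁]
  ring

/-- d_Tω(Gu, Gw) = (1/h)·Ω₁₂(u,w); so G is a linear symplectomorphism from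
(ℝ⁴ⁿ, Ω₁₂) to (ℝ⁴ⁿ, h·d_Tω). -/
theorem eulerA_inverse_symplectic (n : ℕ) (h : ℝ) (hh : 0 < h) :
    ∀ u w, dTomega n (eulerAInv n h u) (eulerAInv n h w) = h⁻¹ * Omega12 n u w :=
  eulerA_inverse_symplectic_general n h
end

section
/- Let M be a symmetric positive definite m×m matrix, V: ℝᵐ → ℝ, h > 0, and φ: ℝᵐ → ℝᵏ C¹. Suppose (q₀,p₀,q₁,p₁) and (q₁,p₁,q₂,p₂) both satisfy the symplectic Euler-B scheme: p_j = M(q_{j+1}−q_j)/h − hλ^{(j)}·Dφ(q_j)ᵀ, (p_{j+1}−p_j)/h = −∇V(q_{j+1}) + Dφ(q_j)ᵀλ^{(j)} + Dφ(q_{j+1})ᵀλ̃^{(j)}, φ(q_j) = 0 = φ(q_{j+1}), for j = 0,1 with multipliers λ^{(j)}, λ̃^{(j)} ∈ ℝᵏ. Then the positions satisfy the SHAKE two-step recursion: M(q₂ − 2q₁ + q₀)/h² = −∇V(q₁) + Dφ(q₁)ᵀμ with μ = λ̃^{(0)} + λ^{(1)}, and φ(q₂) = 0. -/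
/-!
Eliminating the momenta: the two position equations express `p₁ - p₀` through the second
difference `q₂ - 2 q₁ + q₀` and the constraint forces at `q₀` and `q₁`. Substituting this into
the momentum equation of the first step, the force `Dφ(q₀)ᵀλ⁽⁰⁾` cancels, and what remains is
the SHAKE recursion with multiplier `λ̃⁽⁰⁾ + λ⁽¹⁾`.
-/

open scoped RealInnerProductSpace

section TwoStep

variable {𝕜 E F : Type*} [Field 𝕜] [AddCommGroup E] [Module 𝕜 E]
  [FunLike F E E] [AddMonoidHomClass F E E]

theorem map_sub_sub_map_sub (M : F) (q₀ q₁ q₂ : E) :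
    M (q₂ - q₁) - M (q₁ - q₀) = M (q₂ - 2 • q₁ + q₀) := by
  rw [← map_sub]
  congr 1
  abel

theorem momentum_sub_eq_of_legendre {h : 𝕜} (M : F) {q₀ q₁ q₂ p₀ p₁ f₀ f₁ : E}
    (hp₀ : p₀ = h⁻¹ • M (q₁ - q₀) - h • f₀) (hp₁ : p₁ = h⁻¹ • M (q₂ - q₁) - h • f₁) :
    p₁ - p₀ = h⁻¹ • M (q₂ - 2 • q₁ + q₀) - h • (f₁ - f₀) := by
  rw [hp₀, hp₁, ← map_sub_sub_map_sub]
  module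

theorem second_difference_eq_of_eulerB_two_step {h : 𝕜} (hh : h ≠ 0) (M : F)
    {q₀ q₁ q₂ p₀ p₁ g f₀ f₁ f₁' : E}
    (hp₀ : p₀ = h⁻¹ • M (q₁ - q₀) - h • f₀)
    (hstep : h⁻¹ • (p₁ - p₀) = -g + f₀ + f₁')
    (hp₁ : p₁ = h⁻¹ • M (q₂ - q₁) - h • f₁) :
    (h ^ 2)⁻¹ • M (q₂ - 2 • q₁ + q₀) = -g + (f₁' + f₁) := by
  rw [momentum_sub_eq_of_legendre M hp₀ hp₁, smul_sub, smul_smul, smul_smul,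
    inv_mul_cancel₀ hh, one_smul, ← sq, inv_pow] at hstep
  linear_combination (norm := module) hstep

end TwoStep

theorem eulerB_composition_is_SHAKE_general (m k : ℕ) (h : ℝ) (hh : 0 < h)
    (M : EuclideanSpace ℝ (Fin m) ≃L[ℝ] EuclideanSpace ℝ (Fin m))
    (V : EuclideanSpace ℝ (Fin m) → ℝ)
    (φ : Fin k → EuclideanSpace ℝ (Fin m) → ℝ)
    (q₀ p₀ q₁ p₁ q₂ : EuclideanSpace ℝ (Fin m))
    (lam0 lamt0 lam1 : Fin k → ℝ)
    -- step j = 0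
    (e0a : p₀ = h⁻¹ • M (q₁ - q₀) - h • ∑ α, lam0 α • gradient (φ α) q₀)
    (e0b : h⁻¹ • (p₁ - p₀) = -gradient V q₁ +
      (∑ α, lam0 α • gradient (φ α) q₀) + ∑ α, lamt0 α • gradient (φ α) q₁)
    -- step j = 1
    (e1a : p₁ = h⁻¹ • M (q₂ - q₁) - h • ∑ α, lam1 α • gradient (φ α) q₁)
    (c2 : ∀ α, φ α q₂ = 0) :
    ((h ^ 2)⁻¹ • M (q₂ - 2 • q₁ + q₀) =
      -gradient V q₁ + ∑ α, (lamt0 α + lam1 α) • gradient (φ α) q₁) ∧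
    (∀ α, φ α q₂ = 0) := by
  refine ⟨?_, c2⟩
  simp only [add_smul, Finset.sum_add_distrib]
  exact second_difference_eq_of_eulerB_two_step hh.ne' M e0a e0b e1a

/-- Two consecutive steps of the cotangent-lifted symplectic Euler-B scheme for a
constrained mechanical Lagrangian reproduce the SHAKE two-step recursion. -/
theorem eulerB_composition_is_SHAKE (m k : ℕ) (h : ℝ) (hh : 0 < h)
    (M : EuclideanSpace ℝ (Fin m) ≃L[ℝ] EuclideanSpace ℝ (Fin m))
    (hMsym : ∀ x y : EuclideanSpace ℝ (Fin m), ⟪M x, y⟫ = ⟪x, M y⟫)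
    (hMpos : ∀ x : EuclideanSpace ℝ (Fin m), x ≠ 0 → 0 < ⟪M x, x⟫)
    (V : EuclideanSpace ℝ (Fin m) → ℝ)
    (φ : Fin k → EuclideanSpace ℝ (Fin m) → ℝ)
    (hφ : ∀ α, ContDiff ℝ 1 (φ α))
    (q₀ p₀ q₁ p₁ q₂ p₂ : EuclideanSpace ℝ (Fin m))
    (lam0 lamt0 lam1 lamt1 : Fin k → ℝ)
    -- step j = 0
    (e0a : p₀ = h⁻¹ • M (q₁ - q₀) - h • ∑ α, lam0 α • gradient (φ α) q₀)
    (e0b : h⁻¹ • (p₁ - p₀) = -gradient V q₁ +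
      (∑ α, lam0 α • gradient (φ α) q₀) + ∑ α, lamt0 α • gradient (φ α) q₁)
    (c0 : ∀ α, φ α q₀ = 0) (c1 : ∀ α, φ α q₁ = 0)
    -- step j = 1
    (e1a : p₁ = h⁻¹ • M (q₂ - q₁) - h • ∑ α, lam1 α • gradient (φ α) q₁)
    (e1b : h⁻¹ • (p₂ - p₁) = -gradient V q₂ +
      (∑ α, lam1 α • gradient (φ α) q₁) + ∑ α, lamt1 α • gradient (φ α) q₂)
    (c2 : ∀ α, φ α q₂ = 0) :
    ((h ^ 2)⁻¹ • M (q₂ - 2 • q₁ + q₀) =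
      -gradient V q₁ + ∑ α, (lamt0 α + lam1 α) • gradient (φ α) q₁) ∧
    (∀ α, φ α q₂ = 0) :=
  eulerB_composition_is_SHAKE_general m k h hh M V φ q₀ p₀ q₁ p₁ q₂ lam0 lamt0 lam1 e0a e0b e1a c2
end
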